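/- A code map q : C → D ⊆ F₂ⁿ is monomial if and only if it is a composition of finitely many basic monomial maps (adding constant zero, adding constant one, deleting a neuron, repeating a neuron, permuting indices, injecting into a larger code, and adding a trunk neuron). -/

import Mathlib

open scoped Classical

/-- A neural code: a subset of `F₂ⁿ` for some `n`. -/
structure Code where
  n : ℕ
  carrier : Set (Fin n → ZMod 2)

/-- The elements (codewords) of a code. -/
def Code.El (C : Code) : Type := ↥C.carrier

/-- The trunk of a code `C`, as a subset of `C`, determined by `α`. -/
def trunkIn (C : Code) (α : Set (Fin C.n)) : Set C.El :=
  {w : C.El | ∀ i ∈ α, w.1 i = 1}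

/-- A code map `q : C → D` is monomial if the preimage of every simple trunk of
`D` is a trunk of `C` or empty. -/
def IsMonomialMap {C D : Code} (q : C.El → D.El) : Prop :=
  ∀ j : Fin D.n,
    (∃ α : Set (Fin C.n), q ⁻¹' trunkIn D {j} = trunkIn C α) ∨
    q ⁻¹' trunkIn D {j} = ∅

/-- The code map `C → f(C)` induced by an ambient map `f`. -/
def mapToImage {n m : ℕ} (C : Set (Fin n → ZMod 2))
    (f : (Fin n → ZMod 2) → (Fin m → ZMod 2)) :
    Code.El ⟨n, C⟩ → Code.El ⟨m, f '' C⟩ :=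
  fun w => ⟨f w.1, ⟨w.1, w.2, rfl⟩⟩

/-- The basic monomial maps: adding a constant zero neuron, adding a constant
one neuron, deleting a neuron, repeating a neuron, permuting the indices of the
neurons, injecting the code into a bigger code, and adding a trunk neuron. -/
inductive IsBasicMonomialMap : (C D : Code) → (C.El → D.El) → Prop
  | acz {n : ℕ} (C : Set (Fin n → ZMod 2)) :
      IsBasicMonomialMap ⟨n, C⟩ ⟨n + 1, (fun w => Fin.snoc w 0) '' C⟩
        (mapToImage C fun w => Fin.snoc w 0)
  | aco {n : ℕ} (C : Set (Fin n → ZMod 2)) :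
      IsBasicMonomialMap ⟨n, C⟩ ⟨n + 1, (fun w => Fin.snoc w 1) '' C⟩
        (mapToImage C fun w => Fin.snoc w 1)
  | del {n : ℕ} (C : Set (Fin (n + 1) → ZMod 2)) (i : Fin (n + 1)) :
      IsBasicMonomialMap ⟨n + 1, C⟩ ⟨n, (fun w => w ∘ i.succAbove) '' C⟩
        (mapToImage C fun w => w ∘ i.succAbove)
  | rep {n : ℕ} (C : Set (Fin n → ZMod 2)) (i : Fin n) :
      IsBasicMonomialMap ⟨n, C⟩ ⟨n + 1, (fun w => Fin.snoc w (w i)) '' C⟩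
        (mapToImage C fun w => Fin.snoc w (w i))
  | per {n : ℕ} (C : Set (Fin n → ZMod 2)) (σ : Equiv.Perm (Fin n)) :
      IsBasicMonomialMap ⟨n, C⟩ ⟨n, (fun w => w ∘ σ) '' C⟩
        (mapToImage C fun w => w ∘ σ)
  | inj {n : ℕ} (C C' : Set (Fin n → ZMod 2)) (h : C ⊆ C') :
      IsBasicMonomialMap ⟨n, C⟩ ⟨n, C'⟩ (Set.inclusion h)
  | atn {n : ℕ} (C : Set (Fin n → ZMod 2)) (α : Set (Fin n)) :
      IsBasicMonomialMap ⟨n, C⟩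
        ⟨n + 1, (fun w => Fin.snoc w (if ∀ i ∈ α, w i = 1 then 1 else 0)) '' C⟩
        (mapToImage C fun w => Fin.snoc w (if ∀ i ∈ α, w i = 1 then 1 else 0))

/-- Finite compositions of basic monomial maps. -/
inductive IsCompositionOfBasics : (C D : Code) → (C.El → D.El) → Prop
  | single {C D : Code} {q : C.El → D.El} :
      IsBasicMonomialMap C D q → IsCompositionOfBasics C D q
  | comp {C D E : Code} {q : C.El → D.El} {p : D.El → E.El} :
      IsCompositionOfBasics C D q → IsBasicMonomialMap D E p →
      IsCompositionOfBasics C E (p ∘ q)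

/-! ### Auxiliary lemmas -/

lemma zmod2_dichotomy (a : ZMod 2) : a = 0 ∨ a = 1 := by
  revert a; decide

lemma isMonomial_mapToImage {n m : ℕ} (S : Set (Fin n → ZMod 2))
    (f : (Fin n → ZMod 2) → (Fin m → ZMod 2))
    (h : ∀ j : Fin m,
      (∃ α : Set (Fin n), ∀ w ∈ S, (f w j = 1 ↔ ∀ i ∈ α, w i = 1)) ∨
      (∀ w ∈ S, f w j ≠ 1)) :
    IsMonomialMap (mapToImage S f) := by
  intro j
  rcases h j with ⟨α, hα⟩ | h0
  · left
    refine ⟨α, ?_⟩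
    ext ⟨w, hw⟩
    exact ⟨fun h' => (hα w hw).mp (h' j rfl), fun h' i hi => by
      rw [Set.mem_singleton_iff] at hi; subst hi; exact (hα w hw).mpr h'⟩
  · right
    ext ⟨w, hw⟩
    exact ⟨fun h => h0 w hw (h j rfl), fun h => h.elim⟩

lemma IsBasicMonomialMap.isMonomial {C D : Code} {q : C.El → D.El}
    (h : IsBasicMonomialMap C D q) : IsMonomialMap q := by
  cases h with
  | acz S =>
    apply isMonomial_mapToImage
    intro j
    refine Fin.lastCases ?_ (fun i => ?_) j
    · right; intro w _; simp [Fin.snoc_last]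
    · left; exact ⟨{i}, fun w _ => by simp [Fin.snoc_castSucc]⟩
  | aco S =>
    apply isMonomial_mapToImage
    intro j
    refine Fin.lastCases ?_ (fun i => ?_) j
    · left; exact ⟨∅, fun w _ => by simp [Fin.snoc_last]⟩
    · left; exact ⟨{i}, fun w _ => by simp [Fin.snoc_castSucc]⟩
  | del S i =>
    apply isMonomial_mapToImage
    intro j
    left; exact ⟨{i.succAbove j}, fun w _ => by simp⟩
  | rep S i =>
    apply isMonomial_mapToImage
    intro j
    refine Fin.lastCases ?_ (fun i' => ?_) j
    · left; exact ⟨{i}, fun w _ => by simp [Fin.snoc_last]⟩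
    · left; exact ⟨{i'}, fun w _ => by simp [Fin.snoc_castSucc]⟩
  | per S σ =>
    apply isMonomial_mapToImage
    intro j
    left; exact ⟨{σ j}, fun w _ => by simp⟩
  | inj S S' hss =>
    intro j
    left; exact ⟨{j}, rfl⟩
  | atn S α =>
    apply isMonomial_mapToImage
    intro j
    refine Fin.lastCases ?_ (fun i => ?_) j
    · left
      refine ⟨α, fun w _ => ?_⟩
      simp only [Fin.snoc_last]
      split <;> simp_all
    · left; exact ⟨{i}, fun w _ => by simp [Fin.snoc_castSucc]⟩

lemma IsMonomialMap.comp {C D E : Code} {q : C.El → D.El} {p : D.El → E.El}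
    (hq : IsMonomialMap q) (hp : IsMonomialMap p) : IsMonomialMap (p ∘ q) := by
  intro j
  rcases hp j with ⟨β, hβ⟩ | hβ
  · have hpre : (p ∘ q) ⁻¹' trunkIn E {j} = q ⁻¹' trunkIn D β := by
      rw [Set.preimage_comp, hβ]
    by_cases hcase : ∀ i, i ∈ β → ∃ α, q ⁻¹' trunkIn D {i} = trunkIn C α
    · choose α hα using hcase
      left
      refine ⟨⋃ i, ⋃ h : i ∈ β, α i h, ?_⟩
      rw [hpre]
      ext w
      constructor
      · intro hw a ha
        simp only [Set.mem_iUnion] at ha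
        obtain ⟨i, hi, hai⟩ := ha
        have hwi : w ∈ q ⁻¹' trunkIn D {i} := by
          intro i' hi'
          rw [Set.mem_singleton_iff] at hi'
          subst hi'
          exact hw i' hi
        rw [hα i hi] at hwi
        exact hwi a hai
      · intro hw i hi
        have hwi : w ∈ trunkIn C (α i hi) := by
          intro a ha
          exact hw a (by simp only [Set.mem_iUnion]; exact ⟨i, hi, ha⟩)
        rw [← hα i hi] at hwi
        exact hwi i rfl
    · push_neg at hcase
      obtain ⟨i, hi, hno⟩ := hcase
      have hemp : q ⁻¹' trunkIn D {i} = ∅ := by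
        rcases hq i with ⟨α, hα⟩ | he
        · exact absurd hα (hno α)
        · exact he
      right
      rw [hpre]
      apply Set.eq_empty_of_subset_empty
      rw [← hemp]
      intro w hw i' hi'
      rw [Set.mem_singleton_iff] at hi'
      subst hi'
      exact hw i' hi
  · right
    rw [Set.preimage_comp, hβ, Set.preimage_empty]

/-! ### Composition machinery -/

/-- `q` is a composition of zero or more basic monomial maps. -/
def StarComp (C D : Code) (q : C.El → D.El) : Prop :=
  ∀ (E : Code) (p : D.El → E.El), IsBasicMonomialMap D E p →
    IsCompositionOfBasics C E (p ∘ q)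

lemma StarComp.refl (C : Code) : StarComp C C id := by
  intro E p hp
  have : p ∘ (id : C.El → C.El) = p := Function.comp_id p
  rw [this]
  exact IsCompositionOfBasics.single hp

lemma StarComp.snoc {C D E : Code} {q : C.El → D.El} {p : D.El → E.El}
    (hq : StarComp C D q) (hp : IsBasicMonomialMap D E p) :
    StarComp C E (p ∘ q) :=
  fun _ _ hr => (hq E p hp).comp hr

lemma StarComp.comp_isComp {C D E : Code} {q : C.El → D.El} {p : D.El → E.El}
    (hq : StarComp C D q) (hp : IsCompositionOfBasics D E p) :
    IsCompositionOfBasics C E (p ∘ q) := by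
  induction hp with
  | single hb => exact hq _ _ hb
  | comp hc hb ih => exact ih.comp hb

lemma StarComp.trans {C D E : Code} {q : C.El → D.El} {p : D.El → E.El}
    (hq : StarComp C D q) (hp : StarComp D E p) : StarComp C E (p ∘ q) :=
  fun F r hr => hq.comp_isComp (hp F r hr)

lemma starComp_congr {C D : Code} {q : C.El → D.El} (h : StarComp C D q)
    {S' : Set (Fin D.n → ZMod 2)} (hS : D.carrier = S')
    (q' : C.El → Code.El ⟨D.n, S'⟩) (hq : ∀ w, (q w).1 = (q' w).1) :
    StarComp C ⟨D.n, S'⟩ q' := by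
  subst hS
  have hq' : q' = q := funext fun w => Subtype.ext (hq w).symm
  rw [hq']
  exact h


noncomputable def chainF {n : ℕ} (V : ℕ → (Fin n → ZMod 2) → ZMod 2) :
    (k : ℕ) → (Fin n → ZMod 2) → (Fin (n + k) → ZMod 2)
  | 0, w => w
  | k+1, w => Fin.snoc (chainF V k w) (V k w)

lemma chainF_castLE {n : ℕ} (V : ℕ → (Fin n → ZMod 2) → ZMod 2) (k : ℕ)
    (w : Fin n → ZMod 2) (i : Fin n) :
    chainF V k w (Fin.castLE (Nat.le_add_right n k) i) = w i := by
  induction k with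
  | zero => rfl
  | succ k ih =>
    have : (Fin.castLE (Nat.le_add_right n (k+1)) i)
        = Fin.castSucc (Fin.castLE (Nat.le_add_right n k) i) := rfl
    rw [chainF, this, Fin.snoc_castSucc]
    exact ih

lemma chainF_natAdd {n : ℕ} (V : ℕ → (Fin n → ZMod 2) → ZMod 2) (k : ℕ)
    (w : Fin n → ZMod 2) (j : ℕ) (hj : j < k) :
    chainF V k w ⟨n + j, by omega⟩ = V j w := by
  induction k with
  | zero => omega
  | succ k ih =>
    rcases Nat.lt_succ_iff_lt_or_eq.mp hj with h | h
    · have : (⟨n + j, by omega⟩ : Fin (n + (k+1)))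
          = Fin.castSucc (⟨n + j, by omega⟩ : Fin (n + k)) := rfl
      rw [chainF, this, Fin.snoc_castSucc]
      exact ih h
    · subst h
      have : (⟨n + j, by omega⟩ : Fin (n + (j+1))) = Fin.last (n + j) := rfl
      rw [chainF, this]
      exact Fin.snoc_last _ _

lemma stage1 {n : ℕ} (S : Set (Fin n → ZMod 2)) (V : ℕ → (Fin n → ZMod 2) → ZMod 2)
    (hV : ∀ k, (∀ w, V k w = 0) ∨
      ∃ α : Set (Fin n), ∀ w, V k w = if ∀ i ∈ α, w i = 1 then 1 else 0) :
    ∀ k, StarComp ⟨n, S⟩ ⟨n + k, chainF V k '' S⟩ (mapToImage S (chainF V k)) := by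
  intro k
  induction k with
  | zero =>
    apply starComp_congr (StarComp.refl ⟨n, S⟩)
    · show S = chainF V 0 '' S
      ext x
      simp [chainF]
    · intro w; rfl
  | succ k ih =>
    have key : ∀ f : (Fin (n + k) → ZMod 2) → (Fin (n + k + 1) → ZMod 2),
        (∀ w : Fin n → ZMod 2, f (chainF V k w) = chainF V (k+1) w) →
        IsBasicMonomialMap ⟨n + k, chainF V k '' S⟩
          ⟨n + k + 1, f '' (chainF V k '' S)⟩ (mapToImage (chainF V k '' S) f) →
        StarComp ⟨n, S⟩ ⟨n + (k+1), chainF V (k+1) '' S⟩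
          (mapToImage S (chainF V (k+1))) := by
      intro f hf hb
      have h2 := ih.snoc hb
      apply starComp_congr h2
      · show f '' (chainF V k '' S) = chainF V (k+1) '' S
        rw [Set.image_image]
        apply Set.image_congr
        intro w _; exact hf w
      · intro w
        exact hf w.1
    rcases hV k with h0 | ⟨α, hα⟩
    · apply key (fun u => Fin.snoc u 0)
      · intro w
        show Fin.snoc (chainF V k w) 0 = chainF V (k+1) w
        rw [chainF, h0 w]
      · exact IsBasicMonomialMap.acz _
    · apply key (fun u => Fin.snoc u
        (if ∀ i ∈ (Fin.castLE (Nat.le_add_right n k)) '' α, u i = 1 then 1 else 0))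
      · intro w
        have hiff : (∀ i ∈ (Fin.castLE (Nat.le_add_right n k)) '' α,
            chainF V k w i = 1) ↔ (∀ i ∈ α, w i = 1) := by
          rw [Set.forall_mem_image]
          apply forall_congr'
          intro i
          apply imp_congr_right
          intro _
          rw [chainF_castLE]
        have hval : (if ∀ i ∈ (Fin.castLE (Nat.le_add_right n k)) '' α,
            chainF V k w i = 1 then (1 : ZMod 2) else 0) = V k w := by
          rw [hα w]
          exact if_congr hiff rfl rfl
        show Fin.snoc (chainF V k w)
            (if ∀ i ∈ (Fin.castLE (Nat.le_add_right n k)) '' α,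
              chainF V k w i = 1 then 1 else 0) = chainF V (k+1) w
        rw [chainF, hval]
      · exact IsBasicMonomialMap.atn _ _

lemma stage2 (m : ℕ) : ∀ (t : ℕ) (E : Set (Fin (m + t) → ZMod 2)),
    StarComp ⟨m + t, E⟩ ⟨m, (fun u => u ∘ Fin.castAdd t) '' E⟩
      (mapToImage E (fun u => u ∘ Fin.castAdd t)) := by
  intro t
  induction t with
  | zero =>
    intro E
    apply starComp_congr (StarComp.refl ⟨m, E⟩)
    · show E = (fun u => u ∘ Fin.castAdd 0) '' E
      ext x
      constructor
      · intro hx; exact ⟨x, hx, rfl⟩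
      · rintro ⟨y, hy, rfl⟩; exact hy
    · intro w; rfl
  | succ t ih =>
    intro E
    have hb : IsBasicMonomialMap ⟨m + t + 1, E⟩
        ⟨m + t, (fun u => u ∘ (Fin.last (m+t)).succAbove) '' E⟩
        (mapToImage E (fun u => u ∘ (Fin.last (m+t)).succAbove)) :=
      IsBasicMonomialMap.del E (Fin.last (m+t))
    have h1 : StarComp ⟨m + (t+1), E⟩
        ⟨m + t, (fun u => u ∘ (Fin.last (m+t)).succAbove) '' E⟩
        ((mapToImage E (fun u => u ∘ (Fin.last (m+t)).succAbove)) ∘ id) :=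
      (StarComp.refl _).snoc hb
    have h2 := h1.trans (ih _)
    apply starComp_congr h2
    · show (fun u => u ∘ Fin.castAdd t) ''
          ((fun u => u ∘ (Fin.last (m+t)).succAbove) '' E)
        = (fun u => u ∘ Fin.castAdd (t+1)) '' E
      rw [Set.image_image]
      apply Set.image_congr
      intro u _
      funext j
      show u ((Fin.last (m+t)).succAbove (Fin.castAdd t j)) = u (Fin.castAdd (t+1) j)
      rw [Fin.succAbove_last]
      exact congrArg u (Fin.ext rfl)
    · intro w
      funext j
      show w.1 ((Fin.last (m+t)).succAbove (Fin.castAdd t j)) = w.1 (Fin.castAdd (t+1) j)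
      congr 1
      rw [Fin.succAbove_last]
      exact Fin.ext rfl

lemma starComp_cast {C : Code} {a : ℕ} {T : Set (Fin a → ZMod 2)}
    {q : C.El → Code.El ⟨a, T⟩} (h : StarComp C ⟨a, T⟩ q) {b : ℕ} (hab : a = b) :
    StarComp C ⟨b, (fun u => u ∘ Fin.cast hab.symm) '' T⟩
      (mapToImage T (fun u => u ∘ Fin.cast hab.symm) ∘ q) := by
  subst hab
  apply starComp_congr h
  · show T = (fun u => u ∘ Fin.cast rfl) '' T
    ext x
    constructor
    · intro hx; exact ⟨x, hx, rfl⟩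
    · rintro ⟨y, hy, rfl⟩; exact hy
  · intro w; rfl


lemma isComp_congr {C D : Code} {q q' : C.El → D.El}
    (h : IsCompositionOfBasics C D q) (he : ∀ w, q w = q' w) :
    IsCompositionOfBasics C D q' := (funext he) ▸ h

/-- A code map `q : C → D` is monomial iff it is a composition of
finitely many basic monomial maps. -/
theorem stmt_17 {C D : Code} (q : C.El → D.El) :
    IsMonomialMap q ↔ IsCompositionOfBasics C D q := by
  constructor
  · intro hq
    have hchoice : ∀ j : Fin D.n, ∃ v : (Fin C.n → ZMod 2) → ZMod 2,
        ((∀ w, v w = 0) ∨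
          ∃ α : Set (Fin C.n), ∀ w, v w = if ∀ i ∈ α, w i = 1 then 1 else 0) ∧
        ∀ w : C.El, (q w).1 j = v w.1 := by
      intro j
      rcases hq j with ⟨α, hα⟩ | hemp
      · refine ⟨fun w => if ∀ i ∈ α, w i = 1 then 1 else 0,
          Or.inr ⟨α, fun _ => rfl⟩, ?_⟩
        intro w
        have hiff : (q w).1 j = 1 ↔ ∀ i ∈ α, w.1 i = 1 := by
          have h := Set.ext_iff.mp hα w
          simpa [trunkIn, Set.mem_preimage] using h
        show (q w).1 j = if ∀ i ∈ α, w.1 i = 1 then 1 else 0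
        by_cases hc : ∀ i ∈ α, w.1 i = 1
        · rw [if_pos hc]
          exact hiff.mpr hc
        · rw [if_neg hc]
          rcases zmod2_dichotomy ((q w).1 j) with h0 | h1
          · exact h0
          · exact absurd (hiff.mp h1) hc
      · refine ⟨fun _ => 0, Or.inl fun _ => rfl, ?_⟩
        intro w
        have hw : w ∉ q ⁻¹' trunkIn D {j} := by
          rw [hemp]; exact Set.notMem_empty w
        rcases zmod2_dichotomy ((q w).1 j) with h0 | h1
        · exact h0
        · exfalso
          apply hw
          intro i hi
          rw [Set.mem_singleton_iff] at hi
          subst hi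
          exact h1
    choose v hv1 hv2 using hchoice
    set V : ℕ → (Fin C.n → ZMod 2) → ZMod 2 :=
      fun k => if h : k < D.n then v ⟨k, h⟩ else fun _ => 0 with hVdef
    have hVprop : ∀ k, (∀ w, V k w = 0) ∨
        ∃ α : Set (Fin C.n), ∀ w, V k w = if ∀ i ∈ α, w i = 1 then 1 else 0 := by
      intro k
      by_cases h : k < D.n
      · simpa [hVdef, h] using hv1 ⟨k, h⟩
      · left; intro w; simp [hVdef, h]
    have s1 := stage1 C.carrier V hVprop D.n
    have hab : C.n + D.n = D.n + C.n := Nat.add_comm _ _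
    set σ : Equiv.Perm (Fin (C.n + D.n)) := (finCongr hab).trans finAddFlip with hσ
    have s2 := s1.snoc (IsBasicMonomialMap.per (chainF V D.n '' C.carrier) σ)
    have s3 := starComp_cast s2 hab
    have s4 := s3.trans (stage2 D.n C.n _)
    have hpos : ∀ j : Fin D.n,
        σ (Fin.cast hab.symm (Fin.castAdd C.n j)) = ⟨C.n + j.1, by omega⟩ := by
      intro j
      have h1 : (Fin.cast hab.symm (Fin.castAdd C.n j))
          = (⟨j.1, by omega⟩ : Fin (C.n + D.n)) := rfl
      rw [h1, hσ]
      simp only [Equiv.trans_apply]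
      have h2 : finCongr hab (⟨j.1, by omega⟩ : Fin (C.n + D.n))
          = (⟨j.1, by omega⟩ : Fin (D.n + C.n)) := rfl
      rw [h2]
      exact finAddFlip_apply_mk_left j.2
    have key : ∀ w : C.El,
        (((chainF V D.n w.1 ∘ ⇑σ) ∘ Fin.cast hab.symm) ∘ Fin.castAdd C.n) = (q w).1 := by
      intro w
      funext j
      show chainF V D.n w.1 (σ (Fin.cast hab.symm (Fin.castAdd C.n j))) = (q w).1 j
      rw [hpos j, chainF_natAdd V D.n w.1 j.1 j.2]
      have hVj : V j.1 w.1 = v j w.1 := by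
        rw [hVdef]
        simp only [j.2, dif_pos]
      rw [hVj]
      exact (hv2 j w).symm
    have hsub : ((fun u => u ∘ Fin.castAdd C.n) ''
        ((fun u => u ∘ Fin.cast hab.symm) ''
          ((fun u => u ∘ ⇑σ) '' (chainF V D.n '' C.carrier)))) ⊆ D.carrier := by
      rintro u ⟨u3, ⟨u2, ⟨u1, ⟨w, hw, rfl⟩, rfl⟩, rfl⟩, rfl⟩
      exact Set.mem_of_eq_of_mem (key ⟨w, hw⟩) (q ⟨w, hw⟩).2
    have hbinj : IsBasicMonomialMap
        ⟨D.n, (fun u => u ∘ Fin.castAdd C.n) ''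
          ((fun u => u ∘ Fin.cast hab.symm) ''
            ((fun u => u ∘ ⇑σ) '' (chainF V D.n '' C.carrier)))⟩ D
        (Set.inclusion hsub) := IsBasicMonomialMap.inj _ _ hsub
    have final := s4 D (Set.inclusion hsub) hbinj
    exact isComp_congr final fun w => Subtype.ext (key w)
  · intro h
    induction h with
    | single hb => exact hb.isMonomial
    | comp hc hb ih => exact ih.comp hb.isMonomial
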